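/- arXiv:1712.08192 — 5 statements merged into one kernel-verified Lean document; each statement's English description precedes it below -/
import Mathlib

section
/- Let X, Y ∈ ℂ^{n×k}. There exists a skew-Hermitian matrix Δ ∈ ℂ^{n×n} (i.e., Δᴴ = -Δ) with Δ X = Y if and only if Y X⁺ X = Y and Yᴴ X = -Xᴴ Y, where X⁺ denotes the Moore–Penrose pseudoinverse of X. -/
open Matrix

/-- `Xp` is the Moore–Penrose pseudoinverse of `X`. -/
def IsMoorePenroseInv {n k : ℕ} (X : Matrix (Fin n) (Fin k) ℂ)
    (Xp : Matrix (Fin k) (Fin n) ℂ) : Prop :=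
  X * Xp * X = X ∧ Xp * X * Xp = Xp ∧ (X * Xp)ᴴ = X * Xp ∧ (Xp * X)ᴴ = Xp * X

theorem skewHermitian_mapping_exists {n k : ℕ}
    (X Y : Matrix (Fin n) (Fin k) ℂ) (Xp : Matrix (Fin k) (Fin n) ℂ)
    (hXp : IsMoorePenroseInv X Xp) :
    (∃ Δ : Matrix (Fin n) (Fin n) ℂ, Δᴴ = -Δ ∧ Δ * X = Y) ↔
      (Y * Xp * X = Y ∧ Yᴴ * X = -(Xᴴ * Y)) := by
  obtain ⟨h1, h2, h3, h4⟩ := hXp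
  constructor
  · rintro ⟨Δ, hs, rfl⟩
    refine ⟨?_, ?_⟩
    · calc Δ * X * Xp * X = Δ * (X * Xp * X) := by
            rw [Matrix.mul_assoc, Matrix.mul_assoc, Matrix.mul_assoc]
        _ = Δ * X := by rw [h1]
    · calc (Δ * X)ᴴ * X = Xᴴ * (Δᴴ * X) := by
            rw [conjTranspose_mul, Matrix.mul_assoc]
        _ = -(Xᴴ * (Δ * X)) := by rw [hs]; simp [Matrix.mul_assoc]
  · rintro ⟨hy, hskew⟩
    refine ⟨Y * Xp - (Y * Xp)ᴴ + (Y * Xp)ᴴ * X * Xp, ?_, ?_⟩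
    · have hXXp : Xpᴴ * Xᴴ = X * Xp := by rw [← conjTranspose_mul, h3]
      have key : X * Xp * (Y * Xp) = -((Y * Xp)ᴴ * (X * Xp)) := by
        rw [conjTranspose_mul, Matrix.mul_assoc Xpᴴ, ← Matrix.mul_assoc Yᴴ, hskew, ← hXXp]
        simp [Matrix.mul_assoc]
      have hδ : ((Y * Xp)ᴴ * X * Xp)ᴴ = X * Xp * (Y * Xp) := by
        rw [conjTranspose_mul, conjTranspose_mul, conjTranspose_conjTranspose,
          ← Matrix.mul_assoc, hXXp]
      rw [conjTranspose_add, conjTranspose_sub, conjTranspose_conjTranspose, hδ, key,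
        Matrix.mul_assoc]
      abel
    · have hYX : (Y * Xp)ᴴ * X * Xp * X = (Y * Xp)ᴴ * X := by
        have hX : X * (Xp * X) = X := by rw [← Matrix.mul_assoc]; exact h1
        rw [Matrix.mul_assoc, Matrix.mul_assoc, hX]
      rw [Matrix.add_mul, Matrix.sub_mul, hYX, hy]
      abel
end

section
/- Let X, Y ∈ ℂ^{n×k} satisfy Y X⁺ X = Y and Yᴴ X = -Xᴴ Y. Then the matrix Δ := Y X⁺ - (Y X⁺)ᴴ - (X⁺)ᴴ Xᴴ Y X⁺ is skew-Hermitian and satisfies Δ X = Y. -/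
open Matrix

theorem skewHermitian_mapping_solution {n k : ℕ}
    (X Y : Matrix (Fin n) (Fin k) ℂ) (Xp : Matrix (Fin k) (Fin n) ℂ)
    (hXp : IsMoorePenroseInv X Xp)
    (h1 : Y * Xp * X = Y) (h2 : Yᴴ * X = -(Xᴴ * Y)) :
    ((Y * Xp - (Y * Xp)ᴴ - Xpᴴ * Xᴴ * Y * Xp)ᴴ
        = -(Y * Xp - (Y * Xp)ᴴ - Xpᴴ * Xᴴ * Y * Xp)) ∧
      (Y * Xp - (Y * Xp)ᴴ - Xpᴴ * Xᴴ * Y * Xp) * X = Y := by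
  obtain ⟨hA, hB, hC, hD⟩ := hXp
  have hXX : Xpᴴ * Xᴴ = X * Xp := by
    rw [← conjTranspose_mul]; exact hC
  have key : Xpᴴ * Yᴴ * X * Xp = -(Xpᴴ * Xᴴ * Y * Xp) := by
    calc Xpᴴ * Yᴴ * X * Xp = Xpᴴ * (Yᴴ * X) * Xp := by
          simp [Matrix.mul_assoc]
      _ = -(Xpᴴ * Xᴴ * Y * Xp) := by
          rw [h2]; simp [Matrix.mul_assoc]
  constructor
  · have hT : (Xpᴴ * Xᴴ * Y * Xp)ᴴ = Xpᴴ * Yᴴ * X * Xp := by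
      simp [conjTranspose_mul, Matrix.mul_assoc]
    rw [conjTranspose_sub, conjTranspose_sub, conjTranspose_conjTranspose, hT, key]
    abel
  · have hYX : (Y * Xp)ᴴ * X = -(Xpᴴ * Xᴴ * Y) := by
      rw [conjTranspose_mul, Matrix.mul_assoc, h2, Matrix.mul_neg, ← Matrix.mul_assoc]
    have hterm : Xpᴴ * Xᴴ * Y * Xp * X = Xpᴴ * Xᴴ * Y := by
      calc Xpᴴ * Xᴴ * Y * Xp * X = Xpᴴ * Xᴴ * (Y * Xp * X) := by
            simp [Matrix.mul_assoc]
        _ = Xpᴴ * Xᴴ * Y := by rw [h1]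
    rw [Matrix.sub_mul, Matrix.sub_mul, h1, hYX, hterm]
    abel
end

section
/- Let u ∈ ℂ^m, r ∈ ℂ^n, w ∈ ℂ^n, s ∈ ℂ^m with u ≠ 0, w ≠ 0, and uᴴ s = rᴴ w. Then the matrix Δ := (r uᴴ)/‖u‖² + (w sᴴ)/‖w‖² - ((sᴴ u) w uᴴ)/(‖w‖² ‖u‖²) satisfies Δ u = r and Δᴴ w = s. -/
/-! Δ is a combination of the rank-one matrices `r uᴴ`, `w sᴴ`, `w uᴴ`, and `(x yᴴ) v = (yᴴ v) x`.
In `Δ u` the last term cancels the cross term `(sᴴu / ‖w‖²) w`; in `Δᴴ w` it cancels the cross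
term `(rᴴw / ‖u‖²) u`, once `rᴴw` is replaced by `uᴴs`. -/

open Matrix

/-- Euclidean norm of a complex vector. -/
noncomputable def enorm {n : ℕ} (x : Fin n → ℂ) : ℝ := Real.sqrt (∑ i, ‖x i‖ ^ 2)

/-- The complex inner product `xᴴ y` of two vectors. -/
noncomputable def dotH {n : ℕ} (x y : Fin n → ℂ) : ℂ :=
  ∑ i, (starRingEnd ℂ) (x i) * y i

section MappingSolution

variable {K m n : Type*} [Field K] [StarRing K] [Fintype m] [Fintype n]

def mappingSolution (u : m → K) (r w : n → K) (s : m → K) : Matrix n m K :=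
  (star u ⬝ᵥ u)⁻¹ • vecMulVec r (star u) + (star w ⬝ᵥ w)⁻¹ • vecMulVec w (star s)
    - ((star s ⬝ᵥ u) / ((star w ⬝ᵥ w) * (star u ⬝ᵥ u))) • vecMulVec w (star u)

theorem mappingSolution_mulVec (u : m → K) (r w : n → K) (s : m → K)
    (hu : star u ⬝ᵥ u ≠ 0) : mappingSolution u r w s *ᵥ u = r := by
  simp only [mappingSolution, sub_mulVec, add_mulVec, smul_mulVec, vecMulVec_mulVec,
    op_smul_eq_smul, smul_smul]
  have hcoeff : star s ⬝ᵥ u / (star w ⬝ᵥ w * star u ⬝ᵥ u) * star u ⬝ᵥ u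
      = (star w ⬝ᵥ w)⁻¹ * star s ⬝ᵥ u := by
    field_simp
  rw [inv_mul_cancel₀ hu, one_smul, hcoeff, add_sub_cancel_right]

theorem conjTranspose_mappingSolution_mulVec (u : m → K) (r w : n → K) (s : m → K)
    (hw : star w ⬝ᵥ w ≠ 0) (h : star u ⬝ᵥ s = star r ⬝ᵥ w) :
    (mappingSolution u r w s)ᴴ *ᵥ w = s := by
  simp only [mappingSolution, conjTranspose_sub, conjTranspose_add, conjTranspose_smul,
    conjTranspose_vecMulVec, star_star, sub_mulVec, add_mulVec, smul_mulVec, vecMulVec_mulVec,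
    op_smul_eq_smul, smul_smul, star_inv₀, star_div₀, star_mul', ← star_dotProduct]
  have hcoeff : star u ⬝ᵥ s / (star w ⬝ᵥ w * star u ⬝ᵥ u) * star w ⬝ᵥ w
      = (star u ⬝ᵥ u)⁻¹ * star r ⬝ᵥ w := by
    rw [h]
    field_simp
  rw [inv_mul_cancel₀ hw, one_smul, hcoeff, add_sub_cancel_left]

end MappingSolution

theorem dotH_eq_star_dotProduct {k : ℕ} (x y : Fin k → ℂ) : dotH x y = star x ⬝ᵥ y := rfl

theorem ofReal_enorm_sq {k : ℕ} (x : Fin k → ℂ) : ((enorm x : ℝ) : ℂ) ^ 2 = star x ⬝ᵥ x := by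
  rw [_root_.enorm, ← Complex.ofReal_pow, Real.sq_sqrt (by positivity), Complex.ofReal_sum]
  exact Finset.sum_congr rfl fun i _ => by push_cast; exact (Complex.conj_mul' (x i)).symm

theorem matrix_mapping_solution {n m : ℕ}
    (u : Fin m → ℂ) (r : Fin n → ℂ) (w : Fin n → ℂ) (s : Fin m → ℂ)
    (hu : u ≠ 0) (hw : w ≠ 0) (h : dotH u s = dotH r w)
    (Δ : Matrix (Fin n) (Fin m) ℂ)
    (hΔ : Δ = fun i j =>
      r i * (starRingEnd ℂ) (u j) / (enorm u : ℂ) ^ 2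
        + w i * (starRingEnd ℂ) (s j) / (enorm w : ℂ) ^ 2
        - dotH s u * (w i * (starRingEnd ℂ) (u j)) / ((enorm w : ℂ) ^ 2 * (enorm u : ℂ) ^ 2)) :
    Δ.mulVec u = r ∧ Δᴴ.mulVec w = s := by
  have hΔ_eq : Δ = mappingSolution u r w s := by
    ext i j
    simp only [hΔ, ofReal_enorm_sq, dotH_eq_star_dotProduct, mappingSolution, Matrix.sub_apply,
      Matrix.add_apply, Matrix.smul_apply, vecMulVec_apply, Pi.star_apply, starRingEnd_apply,
      smul_eq_mul]
    ring
  subst hΔ_eq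
  open scoped ComplexOrder in
  exact ⟨mappingSolution_mulVec u r w s (dotProduct_star_self_eq_zero.not.mpr hu),
    conjTranspose_mappingSolution_mulVec u r w s (dotProduct_star_self_eq_zero.not.mpr hw) h⟩
end

section
/- Let u ∈ ℂ^m with u ≠ 0, and r ∈ ℂ^n. Then every matrix Δ ∈ ℂ^{n×m} with Δ u = r satisfies ‖Δ‖_F ≥ ‖r‖/‖u‖, and equality is attained by Δ = (r uᴴ)/‖u‖². -/
/-!
Row-wise Cauchy–Schwarz is submultiplicativity of the Frobenius norm applied to `Δ` times the
column `u`, so `‖r‖ = ‖Δ u‖ ≤ ‖Δ‖_F ‖u‖`. The rank-one matrix `r uᴴ / ‖u‖²` maps `u` to `r`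
because `uᴴ u = ‖u‖²`, and the Frobenius norm of an outer product `a bᵀ` is `‖a‖ ‖b‖`.
-/

open Matrix

/-- Euclidean norm of a complex vector. -/
noncomputable def vecEnorm {n : ℕ} (x : Fin n → ℂ) : ℝ := Real.sqrt (∑ i, ‖x i‖ ^ 2)

/-- Frobenius norm of a matrix. -/
noncomputable def frobNorm {n m : ℕ} (A : Matrix (Fin n) (Fin m) ℂ) : ℝ :=
  Real.sqrt (∑ i, ∑ j, ‖A i j‖ ^ 2)

open WithLp

attribute [local instance] Matrix.frobeniusSeminormedAddCommGroup Matrix.frobeniusNormSMulClass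

theorem PiLp.norm_toLp_star {α ι : Type*} [Fintype ι] [SeminormedAddCommGroup α]
    [StarAddMonoid α] [NormedStarGroup α] (v : ι → α) : ‖toLp 2 (star v)‖ = ‖toLp 2 v‖ := by
  simp only [PiLp.norm_eq_of_L2, Pi.star_apply, norm_star]

namespace Matrix

variable {𝕜 α : Type*} {m n : Type*} [Fintype m] [Fintype n]

theorem frobenius_norm_eq_sqrt [SeminormedAddCommGroup α] (A : Matrix m n α) :
    ‖A‖ = √(∑ i, ∑ j, ‖A i j‖ ^ 2) := by
  simp [frobenius_norm_def, Real.sqrt_eq_rpow]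

theorem frobenius_norm_mulVec_le [RCLike 𝕜] (A : Matrix m n 𝕜) (v : n → 𝕜) :
    ‖toLp 2 (A *ᵥ v)‖ ≤ ‖A‖ * ‖toLp 2 v‖ := by
  calc ‖toLp 2 (A *ᵥ v)‖ = ‖A * replicateCol Unit v‖ := by
        rw [← replicateCol_mulVec, frobenius_norm_replicateCol]
    _ ≤ ‖A‖ * ‖replicateCol Unit v‖ := frobenius_norm_mul _ _
    _ = ‖A‖ * ‖toLp 2 v‖ := by rw [frobenius_norm_replicateCol]

theorem frobenius_norm_vecMulVec [SeminormedRing α] [NormMulClass α] (a : m → α) (b : n → α) :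
    ‖vecMulVec a b‖ = ‖toLp 2 a‖ * ‖toLp 2 b‖ := by
  simp only [frobenius_norm_eq_sqrt, PiLp.norm_eq_of_L2, vecMulVec_apply, norm_mul, mul_pow,
    ← Finset.sum_mul_sum]
  exact Real.sqrt_mul (Finset.sum_nonneg fun i _ => sq_nonneg _) _

theorem star_dotProduct_self_eq_norm_sq [RCLike 𝕜] (v : n → 𝕜) :
    star v ⬝ᵥ v = (‖toLp 2 v‖ ^ 2 : 𝕜) := by
  rw [dotProduct_comm, ← EuclideanSpace.inner_toLp_toLp, inner_self_eq_norm_sq_to_K]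

end Matrix

lemma vecEnorm_eq_norm {n : ℕ} (x : Fin n → ℂ) : vecEnorm x = ‖toLp 2 x‖ :=
  (EuclideanSpace.norm_eq _).symm

lemma frobNorm_eq_norm {n m : ℕ} (A : Matrix (Fin n) (Fin m) ℂ) : frobNorm A = ‖A‖ :=
  (frobenius_norm_eq_sqrt A).symm

theorem frobenius_one_constraint {n m : ℕ}
    (u : Fin m → ℂ) (r : Fin n → ℂ) (hu : u ≠ 0) :
    (∀ Δ : Matrix (Fin n) (Fin m) ℂ, Δ.mulVec u = r → vecEnorm r / vecEnorm u ≤ frobNorm Δ) ∧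
      (Matrix.mulVec (fun i j => r i * (starRingEnd ℂ) (u j) / (vecEnorm u : ℂ) ^ 2) u = r ∧
        frobNorm (fun i j => r i * (starRingEnd ℂ) (u j) / (vecEnorm u : ℂ) ^ 2)
          = vecEnorm r / vecEnorm u) := by
  have hu_pos : 0 < vecEnorm u := by simpa [vecEnorm_eq_norm] using hu
  have hc : (vecEnorm u : ℂ) ^ 2 ≠ 0 := by exact_mod_cast (pow_pos hu_pos 2).ne'
  have hM : (fun i j => r i * (starRingEnd ℂ) (u j) / (vecEnorm u : ℂ) ^ 2)
      = ((vecEnorm u : ℂ) ^ 2)⁻¹ • vecMulVec r (star u) := by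
    ext i j
    simp only [Matrix.smul_apply, vecMulVec_apply, Pi.star_apply, RCLike.star_def, smul_eq_mul]
    ring
  refine ⟨fun Δ hΔ => ?_, ?_, ?_⟩
  · rw [div_le_iff₀ hu_pos, frobNorm_eq_norm, vecEnorm_eq_norm, vecEnorm_eq_norm, ← hΔ]
    exact frobenius_norm_mulVec_le Δ u
  · rw [hM, smul_mulVec, vecMulVec_mulVec, star_dotProduct_self_eq_norm_sq,
      ← vecEnorm_eq_norm, RCLike.ofReal_eq_complex_ofReal, op_smul_eq_smul, smul_smul,
      inv_mul_cancel₀ hc, one_smul]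
  · rw [hM, frobNorm_eq_norm, norm_smul, frobenius_norm_vecMulVec, PiLp.norm_toLp_star,
      ← vecEnorm_eq_norm, ← vecEnorm_eq_norm, norm_inv, norm_pow, Complex.norm_real,
      Real.norm_of_nonneg hu_pos.le]
    field_simp
end

section
/- Let λ ∈ ℂ and Δ ∈ ℂ^{n×n}. Define Δ_J := (Δ - Δᴴ)/(2(1+|λ|²)), Δ_R := -(Δ + Δᴴ)/2, and Δ_E := conj(λ)(Δ - Δᴴ)/(2(1+|λ|²)). If λ is purely imaginary, then Δ_J is skew-Hermitian, Δ_R and Δ_E are Hermitian, Δ_J - Δ_R + λ Δ_E = Δ, and ‖Δ_J‖_F² + ‖Δ_R‖_F² + ‖Δ_E‖_F² = ‖(Δ + Δᴴ)/2‖_F² + (1/(1+|λ|²))·‖(Δ - Δᴴ)/2‖_F². -/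
/-!
Write `S = Δ - Δᴴ` (skew-Hermitian) and `H = Δ + Δᴴ` (Hermitian), and `c = 2(1 + |λ|²)`.
Then `Δ_J` is a real multiple of `S`, `Δ_R` a real multiple of `H`, and `Δ_E` a purely imaginary
multiple of `S`, which gives the symmetry claims. The decomposition reduces to the scalar identity
`1/c + λ·conj(λ)/c = 1/2`, and the norm identity to `|1/c|² + |conj(λ)/c|² = 1/(4(1 + |λ|²))`.
-/

open Matrix

open ComplexConjugate

theorem sub_star_self_mem_skewAdjoint {R : Type*} [AddCommGroup R] [StarAddMonoid R] (x : R) :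
    x - star x ∈ skewAdjoint R := by
  rw [skewAdjoint.mem_iff, star_sub, star_star, neg_sub]

theorem IsSelfAdjoint.smul_mem_skewAdjoint_of_mem {R A : Type*} [Monoid R] [Star R]
    [AddCommGroup A] [StarAddMonoid A] [DistribMulAction R A] [StarModule R A] {r : R}
    (hr : IsSelfAdjoint r) {a : A} (ha : a ∈ skewAdjoint A) : r • a ∈ skewAdjoint A :=
  (star_smul _ _).trans <| (congr_arg₂ _ hr ha).trans <| smul_neg _ _

theorem Complex.mem_skewAdjoint_of_re_eq_zero {z : ℂ} (hz : z.re = 0) : z ∈ skewAdjoint ℂ := by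
  rw [skewAdjoint.mem_iff]
  apply Complex.ext <;> simp [hz]

theorem frobNorm_smul {n m : ℕ} (s : ℂ) (A : Matrix (Fin n) (Fin m) ℂ) :
    frobNorm (s • A) = ‖s‖ * frobNorm A := by
  simp only [frobNorm, Matrix.smul_apply, smul_eq_mul, norm_mul, mul_pow, ← Finset.mul_sum]
  rw [Real.sqrt_mul (by positivity), Real.sqrt_sq (norm_nonneg s)]

theorem frobNorm_neg {n m : ℕ} (A : Matrix (Fin n) (Fin m) ℂ) :
    frobNorm (-A) = frobNorm A := by
  simp [frobNorm]

theorem Complex.inv_two_mul_one_add_norm_sq_add_mul_conj_div (z : ℂ) :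
    ((2 * (1 + ‖z‖ ^ 2) : ℂ))⁻¹ + z * (conj z / (2 * (1 + ‖z‖ ^ 2))) = 2⁻¹ := by
  have : (1 + (‖z‖ : ℂ) ^ 2) ≠ 0 := by exact_mod_cast (by positivity : (1 + ‖z‖ ^ 2 : ℝ) ≠ 0)
  rw [mul_div_assoc', Complex.mul_conj']
  field_simp

theorem Complex.norm_inv_two_mul_one_add_norm_sq_sq_add (z : ℂ) :
    ‖((2 * (1 + ‖z‖ ^ 2) : ℂ))⁻¹‖ ^ 2 + ‖conj z / (2 * (1 + ‖z‖ ^ 2))‖ ^ 2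
      = 1 / (1 + ‖z‖ ^ 2) * ‖(2 : ℂ)⁻¹‖ ^ 2 := by
  have h : ‖(2 * (1 + ‖z‖ ^ 2) : ℂ)‖ = 2 * (1 + ‖z‖ ^ 2) := by
    exact_mod_cast Complex.norm_of_nonneg (by positivity : (0 : ℝ) ≤ 2 * (1 + ‖z‖ ^ 2))
  rw [norm_inv, norm_div, Complex.norm_conj, h]
  field_simp
  simp

theorem three_term_split {n : ℕ} (lam : ℂ) (Δ : Matrix (Fin n) (Fin n) ℂ)
    (ΔJ ΔR ΔE : Matrix (Fin n) (Fin n) ℂ)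
    (hJ : ΔJ = ((2 * (1 + ‖lam‖ ^ 2) : ℂ))⁻¹ • (Δ - Δᴴ))
    (hR : ΔR = -((2 : ℂ)⁻¹ • (Δ + Δᴴ)))
    (hE : ΔE = ((starRingEnd ℂ) lam / (2 * (1 + ‖lam‖ ^ 2) : ℂ)) • (Δ - Δᴴ))
    (hlam : lam.re = 0) :
    ΔJᴴ = -ΔJ ∧ ΔRᴴ = ΔR ∧ ΔEᴴ = ΔE ∧ ΔJ - ΔR + lam • ΔE = Δ ∧
      frobNorm ΔJ ^ 2 + frobNorm ΔR ^ 2 + frobNorm ΔE ^ 2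
        = frobNorm ((2 : ℂ)⁻¹ • (Δ + Δᴴ)) ^ 2
          + (1 / (1 + ‖lam‖ ^ 2)) * frobNorm ((2 : ℂ)⁻¹ • (Δ - Δᴴ)) ^ 2 := by
  subst hJ hR hE
  have hskew := sub_star_self_mem_skewAdjoint Δ
  have hE_coeff : conj lam / (2 * (1 + ‖lam‖ ^ 2) : ℂ) ∈ skewAdjoint ℂ :=
    Complex.mem_skewAdjoint_of_re_eq_zero (by simp [Complex.div_re, hlam, ← Complex.ofReal_pow])
  refine ⟨?_, ?_, ?_, ?_, ?_⟩
  · exact skewAdjoint.mem_iff.mp <|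
      IsSelfAdjoint.smul_mem_skewAdjoint_of_mem (by simp [IsSelfAdjoint]) hskew
  · exact (IsSelfAdjoint.smul (r := (2 : ℂ)⁻¹) (by simp [IsSelfAdjoint]) (.add_star_self Δ)).neg
  · exact isSelfAdjoint_smul_of_mem_skewAdjoint hE_coeff hskew
  · linear_combination (norm := module)
      Complex.inv_two_mul_one_add_norm_sq_add_mul_conj_div lam • (Δ - Δᴴ)
  · simp only [frobNorm_neg, frobNorm_smul]
    linear_combination frobNorm (Δ - Δᴴ) ^ 2 * Complex.norm_inv_two_mul_one_add_norm_sq_sq_add lam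
end
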